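/- Let λ, μ ∈ ℝ and let B : h_1 × F_λ → F_μ be a nonzero sl(2)-invariant bilinear differential operator. Then either μ = λ and B(h,f) = a·h·f for some a ∈ ℝ, or (λ,μ) = ((1−k)/2, (1+k)/2) for some non-negative integer k and B(h,f) = a·h·f^{(k)} for some a ∈ ℝ. -/

import Mathlib

/-!
Since `h₁` consists of constants, `B(h, f) = h · T f` for a linear differential operator
`T = ∑ b_j ∂^j`, and invariance says that `T` intertwines `L^λ_X` and `L^μ_X` for `X ∈ sl(2)`.
Evaluating `T (x - t)^m` at `t` isolates `m! b_m(t)`. Commuting with `d/dx` makes every `b_j`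
constant; `x^m` is an eigenvector of `L^λ_{x d/dx}` with eigenvalue `m + λ`, so `b_j ≠ 0` forces
`μ = j + λ` and `T = c ∂^k`. Finally `x² d/dx` vanishes to second order at `0`, so
`L^μ_{x² d/dx} (T f)` vanishes there, whereas `T (L^λ_{x² d/dx} x^{k-1}) = (k - 1 + 2λ) T x^k`
takes the value `(k - 1 + 2λ) k! c`; hence `λ = (1 - k)/2` when `k ≥ 1`.
-/

noncomputable section
open Function
open scoped ContDiff

/-- The subalgebra of smooth functions `ℝ → ℝ`. -/
def SmoothFn : Subalgebra ℝ (ℝ → ℝ) where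
  carrier := {f | ContDiff ℝ ∞ f}
  mul_mem' := fun {a b} (hf : ContDiff ℝ ∞ a) (hg : ContDiff ℝ ∞ b) => hf.mul hg
  add_mem' := fun {a b} (hf : ContDiff ℝ ∞ a) (hg : ContDiff ℝ ∞ b) => hf.add hg
  algebraMap_mem' := fun c => (contDiff_const : ContDiff ℝ ∞ (fun _ : ℝ => c))

/-- The type of smooth functions `ℝ → ℝ`, i.e. `C^∞(ℝ)`; for `λ ∈ ℝ` it also serves as
the space `F_λ` of `λ`-densities `f (dx)^λ`. -/
abbrev SF : Type := SmoothFn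

theorem mem_SmoothFn {f : ℝ → ℝ} : f ∈ SmoothFn ↔ ContDiff ℝ ∞ f := ⟨fun h => h, fun h => h⟩

/-- The derivative, as an operation on smooth functions. -/
def sderiv (f : SF) : SF :=
  ⟨deriv (f : ℝ → ℝ), mem_SmoothFn.mpr (contDiff_infty_iff_deriv.mp (mem_SmoothFn.mp f.2)).2⟩

/-- The function `x` as a smooth function. -/
def cx : SF := ⟨id, mem_SmoothFn.mpr contDiff_id⟩

/-- The Lie derivative `L^λ_{X_g}(f) = g f′ + λ f g′` of the vector field `X_g = g d/dx`
acting on `λ`-densities. -/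
def Lc (lam : ℝ) (g f : SF) : SF := g * sderiv f + lam • (sderiv g * f)

/-- The generators `1, x, x²` of `sl(2) ⊂ Vect(ℝ)` (identifying `X_g ↔ g`). -/
def sl2set : Set SF := {1, cx, cx * cx}

/-- `h₀ ⊂ F_{−1/2}`: the span of `x (dx)^{−1/2}` and `(dx)^{−1/2}`. -/
def h0sub : Submodule ℝ SF := Submodule.span ℝ {cx, 1}

/-- `h₁ ⊂ F_0`: the span of the constant function `1`. -/
def h1sub : Submodule ℝ SF := Submodule.span ℝ {1}

/-- A bilinear differential operator `h₀ × F_λ → F_μ`: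
`A(h,f) = Σ_{i,j} a_{i,j} h^{(i)} f^{(j)}` with smooth coefficients. -/
def IsBilinDiffOp0 (A : h0sub → SF → SF) : Prop :=
  ∃ (N : ℕ) (a : Fin (N + 1) → Fin (N + 1) → SF),
    ∀ (h : h0sub) (f : SF),
      A h f = ∑ i : Fin (N + 1), ∑ j : Fin (N + 1),
        a i j * (sderiv^[(i : ℕ)] h.1 * sderiv^[(j : ℕ)] f)

/-- A bilinear differential operator `h₁ × F_λ → F_μ`. -/
def IsBilinDiffOp1 (B : h1sub → SF → SF) : Prop :=
  ∃ (N : ℕ) (a : Fin (N + 1) → Fin (N + 1) → SF),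
    ∀ (h : h1sub) (f : SF),
      B h f = ∑ i : Fin (N + 1), ∑ j : Fin (N + 1),
        a i j * (sderiv^[(i : ℕ)] h.1 * sderiv^[(j : ℕ)] f)

namespace SmoothFn

open Finset
open scoped Nat

lemma differentiable (f : SF) : Differentiable ℝ f.1 :=
  (mem_SmoothFn.mp f.2).differentiable (by simp)

def evalAt (t : ℝ) : SF →ₐ[ℝ] ℝ := (Pi.evalAlgHom ℝ (fun _ => ℝ) t).comp SmoothFn.val

lemma evalAt_apply (t : ℝ) (f : SF) : evalAt t f = f.1 t := rfl

lemma evalAt_cx (t : ℝ) : evalAt t cx = t := rfl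

def sderivₗ : Module.End ℝ SF where
  toFun := sderiv
  map_add' f g := Subtype.ext <| funext fun x => deriv_add (differentiable f x) (differentiable g x)
  map_smul' c f := Subtype.ext <| funext fun x => deriv_const_smul c (differentiable f x)

lemma sderivₗ_apply (f : SF) : sderivₗ f = sderiv f := rfl

lemma sderiv_iterate_eq_pow_apply (n : ℕ) (f : SF) : sderiv^[n] f = (sderivₗ ^ n) f :=
  (Module.End.pow_apply sderivₗ n f).symm

lemma sderiv_smul (c : ℝ) (f : SF) : sderiv (c • f) = c • sderiv f := map_smul sderivₗ c f

lemma sderiv_mul (f g : SF) : sderiv (f * g) = sderiv f * g + f * sderiv g :=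
  Subtype.ext <| funext fun x => deriv_mul (differentiable f x) (differentiable g x)

lemma sderiv_algebraMap (c : ℝ) : sderiv (algebraMap ℝ SF c) = 0 :=
  Subtype.ext <| funext fun _ => deriv_const _ c

lemma sderiv_one : sderiv 1 = 0 := by
  simpa using sderiv_algebraMap 1

lemma sderiv_cx : sderiv cx = 1 :=
  Subtype.ext <| funext fun _ => deriv_id _

lemma eq_algebraMap_of_sderiv_eq_zero {f : SF} (hf : sderiv f = 0) :
    f = algebraMap ℝ SF (evalAt 0 f) :=
  Subtype.ext <| funext fun x =>
    is_const_of_deriv_eq_zero (differentiable f) (fun y => congrFun (congrArg Subtype.val hf) y) x 0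

lemma Lc_zero_one (g : SF) : Lc 0 g 1 = 0 := by
  simp [Lc, sderiv_one]

def monomialAt (m : ℕ) (t : ℝ) : SF :=
  ⟨fun x => (x - t) ^ m, mem_SmoothFn.mpr ((contDiff_id.sub contDiff_const).pow m)⟩

lemma sderiv_monomialAt (m : ℕ) (t : ℝ) :
    sderiv (monomialAt m t) = (m : ℝ) • monomialAt (m - 1) t := by
  refine Subtype.ext <| funext fun x => ?_
  change deriv (fun x => (x - t) ^ m) x = m * (x - t) ^ (m - 1)
  simp

lemma sderiv_iterate_monomialAt (j m : ℕ) (t : ℝ) :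
    sderiv^[j] (monomialAt m t) = (m.descFactorial j : ℝ) • monomialAt (m - j) t := by
  induction j with
  | zero => simp
  | succ j ih =>
    rw [iterate_succ_apply', ih, sderiv_smul, sderiv_monomialAt, smul_smul, Nat.descFactorial_succ,
      Nat.sub_sub, Nat.cast_mul, mul_comm]

lemma evalAt_monomialAt_self (m : ℕ) (t : ℝ) :
    evalAt t (monomialAt m t) = if m = 0 then 1 else 0 := by
  simp [evalAt_apply, monomialAt, zero_pow_eq]

lemma evalAt_sderiv_iterate_monomialAt_self (j m : ℕ) (t : ℝ) :
    evalAt t (sderiv^[j] (monomialAt m t)) = if j = m then (m ! : ℝ) else 0 := by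
  rw [sderiv_iterate_monomialAt, map_smul, evalAt_monomialAt_self, smul_eq_mul]
  rcases lt_trichotomy j m with hjm | rfl | hmj
  · simp [hjm.ne, Nat.sub_ne_zero_of_lt hjm]
  · simp [Nat.descFactorial_self]
  · simp [hmj.ne', Nat.descFactorial_eq_zero_iff_lt.mpr hmj]

lemma cx_mul_monomialAt_zero (m : ℕ) : cx * monomialAt m 0 = monomialAt (m + 1) 0 :=
  Subtype.ext <| funext fun x => by simp [cx, monomialAt, pow_succ]; ring

lemma Lc_one (r : ℝ) (f : SF) : Lc r 1 f = sderiv f := by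
  simp [Lc, sderiv_one]

lemma Lc_cx_mul (r : ℝ) (g f : SF) : Lc r (cx * g) f = cx * Lc r g f + r • (g * f) := by
  simp only [Lc, sderiv_mul, sderiv_cx, Algebra.smul_def]
  ring

lemma Lc_cx_monomialAt_zero (r : ℝ) (m : ℕ) :
    Lc r cx (monomialAt m 0) = ((m : ℝ) + r) • monomialAt m 0 := by
  rw [← mul_one cx, Lc_cx_mul, Lc_one, one_mul, sderiv_monomialAt, mul_smul_comm, add_smul]
  rcases m with _ | m
  · simp
  · rw [Nat.add_sub_cancel, cx_mul_monomialAt_zero]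

lemma Lc_cx_mul_cx_monomialAt_zero (r : ℝ) (m : ℕ) :
    Lc r (cx * cx) (monomialAt m 0) = ((m : ℝ) + 2 * r) • monomialAt (m + 1) 0 := by
  rw [Lc_cx_mul, Lc_cx_monomialAt_zero, mul_smul_comm, cx_mul_monomialAt_zero, ← add_smul]
  ring_nf

lemma evalAt_zero_Lc_cx (r : ℝ) (f : SF) : evalAt 0 (Lc r cx f) = r * evalAt 0 f := by
  simp [Lc, sderiv_cx, evalAt_cx]

lemma evalAt_zero_Lc_cx_mul_cx (r : ℝ) (f : SF) : evalAt 0 (Lc r (cx * cx) f) = 0 := by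
  simp [Lc, sderiv_mul, sderiv_cx, evalAt_cx]

end SmoothFn

open SmoothFn Finset
open scoped Nat

def diffOp (n : ℕ) (b : ℕ → SF) : Module.End ℝ SF :=
  ∑ j ∈ range n, LinearMap.mulLeft ℝ (b j) * sderivₗ ^ j

lemma diffOp_apply (n : ℕ) (b : ℕ → SF) (f : SF) :
    diffOp n b f = ∑ j ∈ range n, b j * sderiv^[j] f := by
  simp [diffOp, LinearMap.sum_apply, sderiv_iterate_eq_pow_apply]

lemma sderiv_diffOp (n : ℕ) (b : ℕ → SF) (f : SF) :
    sderiv (diffOp n b f) = diffOp n (sderiv ∘ b) f + diffOp n b (sderiv f) := by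
  simp only [diffOp_apply, ← sum_add_distrib]
  refine (map_sum sderivₗ _ _).trans (sum_congr rfl fun j _ => ?_)
  rw [sderivₗ_apply, sderiv_mul, ← iterate_succ_apply' sderiv, iterate_succ_apply]
  rfl

lemma evalAt_diffOp_monomialAt_self (n : ℕ) (b : ℕ → SF) (m : ℕ) (t : ℝ) :
    evalAt t (diffOp n b (monomialAt m t)) = if m < n then evalAt t (b m) * m ! else 0 := by
  simp only [diffOp_apply, map_sum, map_mul, evalAt_sderiv_iterate_monomialAt_self, mul_ite,
    mul_zero, sum_ite_eq', mem_range]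

lemma diffOp_coeff_eq_zero {n : ℕ} {b : ℕ → SF} (h : ∀ f, diffOp n b f = 0) {m : ℕ}
    (hm : m < n) : b m = 0 := by
  refine Subtype.ext <| funext fun t => ?_
  have := congrArg (evalAt t) (h (monomialAt m t))
  rw [evalAt_diffOp_monomialAt_self, if_pos hm, map_zero] at this
  exact (mul_eq_zero.mp this).resolve_right (by exact_mod_cast m.factorial_ne_zero)

lemma diffOp_eq_single {n m : ℕ} {b : ℕ → SF} (hb : ∀ j < n, j ≠ m → b j = 0) (hm : m < n)
    (f : SF) : diffOp n b f = b m * sderiv^[m] f := by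
  rw [diffOp_apply, sum_eq_single_of_mem m (mem_range.mpr hm)]
  intro j hj hjm
  rw [hb j (mem_range.mp hj) hjm, zero_mul]

namespace diffOp

variable {n : ℕ} {b : ℕ → SF} {lam mu : ℝ}

lemma coeff_eq_algebraMap_of_commute_sderiv
    (h : ∀ f, sderiv (diffOp n b f) = diffOp n b (sderiv f)) {m : ℕ} (hm : m < n) :
    b m = algebraMap ℝ SF (evalAt 0 (b m)) :=
  eq_algebraMap_of_sderiv_eq_zero <| diffOp_coeff_eq_zero (b := sderiv ∘ b)
    (fun f => add_eq_right.mp ((sderiv_diffOp n b f).symm.trans (h f))) hm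

lemma mul_coeff_eq_of_intertwines_cx
    (h : ∀ f, Lc mu cx (diffOp n b f) = diffOp n b (Lc lam cx f)) {m : ℕ} (hm : m < n) :
    mu * evalAt 0 (b m) = (m + lam) * evalAt 0 (b m) := by
  have := congrArg (evalAt 0) (h (monomialAt m 0))
  rw [evalAt_zero_Lc_cx, Lc_cx_monomialAt_zero, map_smul, map_smul,
    evalAt_diffOp_monomialAt_self, if_pos hm, smul_eq_mul, ← mul_assoc, ← mul_assoc] at this
  exact mul_right_cancel₀ (by exact_mod_cast m.factorial_ne_zero) this

lemma mul_coeff_succ_eq_zero_of_intertwines_cx_sq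
    (h : ∀ f, Lc mu (cx * cx) (diffOp n b f) = diffOp n b (Lc lam (cx * cx) f)) {m : ℕ}
    (hm : m + 1 < n) : (m + 2 * lam) * evalAt 0 (b (m + 1)) = 0 := by
  have := congrArg (evalAt 0) (h (monomialAt m 0))
  rw [evalAt_zero_Lc_cx_mul_cx, Lc_cx_mul_cx_monomialAt_zero, map_smul, map_smul,
    evalAt_diffOp_monomialAt_self, if_pos hm, smul_eq_mul, ← mul_assoc, eq_comm,
    mul_eq_zero] at this
  exact this.resolve_right (by exact_mod_cast (m + 1).factorial_ne_zero)

lemma exists_eq_smul_sderiv_iterate (h1 : ∀ f, sderiv (diffOp n b f) = diffOp n b (sderiv f))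
    (hx : ∀ f, Lc mu cx (diffOp n b f) = diffOp n b (Lc lam cx f)) (hne : ∃ f, diffOp n b f ≠ 0) :
    ∃ m < n, mu = m + lam ∧ evalAt 0 (b m) ≠ 0 ∧
      ∀ f, diffOp n b f = evalAt 0 (b m) • sderiv^[m] f := by
  have hconst : ∀ j < n, b j = algebraMap ℝ SF (evalAt 0 (b j)) := fun _ =>
    coeff_eq_algebraMap_of_commute_sderiv h1
  have hweight : ∀ j < n, mu * evalAt 0 (b j) = (j + lam) * evalAt 0 (b j) := fun _ =>
    mul_coeff_eq_of_intertwines_cx hx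
  obtain ⟨m, hmn, hm⟩ : ∃ m < n, evalAt 0 (b m) ≠ 0 := by
    by_contra! h0
    obtain ⟨f, hf⟩ := hne
    refine hf ((diffOp_apply n b f).trans (sum_eq_zero fun j hj => ?_))
    rw [hconst j (mem_range.mp hj), h0 j (mem_range.mp hj), map_zero, zero_mul]
  have hmu : mu = m + lam := mul_right_cancel₀ hm (hweight m hmn)
  have hsingle : ∀ j < n, j ≠ m → b j = 0 := fun j hj hjm => by
    have hc : ((m : ℝ) - j) * evalAt 0 (b j) = 0 := by
      linear_combination hweight j hj - evalAt 0 (b j) * hmu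
    have hmj : (m : ℝ) - j ≠ 0 := sub_ne_zero.mpr (by exact_mod_cast hjm.symm)
    rw [hconst j hj, (mul_eq_zero.mp hc).resolve_left hmj, map_zero]
  refine ⟨m, hmn, hmu, hm, fun f => ?_⟩
  rw [diffOp_eq_single hsingle hmn, Algebra.smul_def, ← hconst m hmn]

end diffOp

lemma IsBilinDiffOp1.exists_eq_mul_diffOp {B : h1sub → SF → SF} (hB : IsBilinDiffOp1 B) :
    ∃ (n : ℕ) (b : ℕ → SF), ∀ h f, B h f = h.1 * diffOp n b f := by
  obtain ⟨N, a, hA⟩ := hB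
  refine ⟨N + 1, fun j => a 0 (Fin.ofNat (N + 1) j), fun h f => ?_⟩
  have hh : ∀ i : Fin (N + 1), i ≠ 0 → sderiv^[i] h.1 = 0 := by
    obtain ⟨r, hr⟩ := Submodule.mem_span_singleton.mp h.2
    intro i hi
    obtain ⟨k, hk⟩ := Nat.exists_eq_succ_of_ne_zero (Fin.val_ne_zero_iff.mpr hi)
    rw [hk, iterate_succ_apply, ← hr, sderiv_smul, sderiv_one, smul_zero,
      sderiv_iterate_eq_pow_apply, map_zero]
  rw [hA, sum_eq_single 0 (fun i _ hi => by simp [hh i hi]) (by simp), diffOp_apply, mul_sum,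
    ← Fin.sum_univ_eq_sum_range]
  refine sum_congr rfl fun j _ => ?_
  simp only [Fin.val_zero, iterate_zero, id, Fin.ofNat_val_eq_self]
  ring

lemma intertwines_of_invariant {lam mu : ℝ} {B : h1sub → SF → SF} {n : ℕ} {b : ℕ → SF}
    (hBT : ∀ h f, B h f = h.1 * diffOp n b f)
    (hinv : ∀ g ∈ sl2set, ∀ (h : h1sub) (hm : Lc 0 g h.1 ∈ h1sub) (f : SF),
      Lc mu g (B h f) = B ⟨Lc 0 g h.1, hm⟩ f + B h (Lc lam g f)) :
    ∀ g ∈ sl2set, ∀ f, Lc mu g (diffOp n b f) = diffOp n b (Lc lam g f) := by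
  intro g hg f
  have one_mem : (1 : SF) ∈ h1sub := Submodule.mem_span_singleton_self 1
  have := hinv g hg ⟨1, one_mem⟩ (by rw [Lc_zero_one]; exact zero_mem _) f
  simpa only [hBT, Lc_zero_one, zero_mul, one_mul, zero_add] using this

/-- Classification of nonzero `sl(2)`-invariant bilinear differential operators
`B : h₁ × F_λ → F_μ`: either `μ = λ` and `B(h,f) = a·h·f`, or
`(λ,μ) = ((1−k)/2, (1+k)/2)` for some `k ∈ ℕ` and `B(h,f) = a·h·f^{(k)}`. -/
theorem sl2_invariant_operators_h1 (lam mu : ℝ) (B : h1sub → SF → SF)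
    (hdiff : IsBilinDiffOp1 B)
    (hinv : ∀ g ∈ sl2set, ∀ (h : h1sub) (hm : Lc 0 g h.1 ∈ h1sub) (f : SF),
      Lc mu g (B h f) = B ⟨Lc 0 g h.1, hm⟩ f + B h (Lc lam g f))
    (hB : B ≠ 0) :
    (mu = lam ∧ ∃ a : ℝ, ∀ (h : h1sub) (f : SF), B h f = a • (h.1 * f)) ∨
      (∃ k : ℕ, lam = (1 - (k : ℝ)) / 2 ∧ mu = (1 + (k : ℝ)) / 2 ∧
        ∃ a : ℝ, ∀ (h : h1sub) (f : SF), B h f = a • (h.1 * sderiv^[k] f)) := by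
  obtain ⟨n, b, hBT⟩ := hdiff.exists_eq_mul_diffOp
  have hT := intertwines_of_invariant hBT hinv
  have hne : ∃ f, diffOp n b f ≠ 0 := by
    by_contra! h0
    exact hB (funext fun h => funext fun f => by rw [hBT, h0, mul_zero]; rfl)
  obtain ⟨m, hmn, hmu, hm, hTm⟩ := diffOp.exists_eq_smul_sderiv_iterate
    (fun f => by simpa only [Lc_one] using hT 1 (by simp [sl2set]) f) (hT cx (by simp [sl2set])) hne
  have hB_eq : ∀ h f, B h f = evalAt 0 (b m) • (h.1 * sderiv^[m] f) := fun h f => by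
    rw [hBT, hTm, mul_smul_comm]
  rcases m with _ | k
  · exact Or.inl ⟨by simpa using hmu, _, by simpa using hB_eq⟩
  · have hk :=
      diffOp.mul_coeff_succ_eq_zero_of_intertwines_cx_sq (hT (cx * cx) (by simp [sl2set])) hmn
    replace hk : (k : ℝ) + 2 * lam = 0 := (mul_eq_zero.mp hk).resolve_right hm
    exact Or.inr ⟨k + 1, by push_cast; linarith, by rw [hmu]; push_cast; linarith, _, hB_eq⟩
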